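/- In the response-function model where O may additionally depend on X (Figure 1c): latent U independent of randomized X, potential outcomes Y(x) and potential observation indicators O(x) jointly determined by U, define p_{y1.x} = P(Y(x)=y, O(x)=1) and θ = P(Y(1)=1) − P(Y(0)=1). Then p_{01.0} + p_{11.1} − 1 ≤ θ ≤ −p_{01.1} − p_{11.0} + 1. -/
import Mathlib


open Finset

open scoped Classical in
/-- Probability of event `A` under (finitely supported) weights `w`. -/
noncomputable def pr {Ω : Type*} [Fintype Ω] (w : Ω → ℝ) (A : Ω → Prop) : ℝ :=
  ∑ ω ∈ Finset.univ.filter A, w ω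

/-- Conditional probability of `A` given `B`. -/
noncomputable def cpr {Ω : Type*} [Fintype Ω] (w : Ω → ℝ) (A B : Ω → Prop) : ℝ :=
  pr w (fun ω => A ω ∧ B ω) / pr w B

open scoped Classical in
lemma pr_mono {Ω : Type*} [Fintype Ω] (w : Ω → ℝ) (hw : ∀ u, 0 ≤ w u)
    (A B : Ω → Prop) (h : ∀ u, A u → B u) : pr w A ≤ pr w B := by
  apply Finset.sum_le_sum_of_subset_of_nonneg
  · intro u hu
    simp only [Finset.mem_filter] at *
    exact ⟨hu.1, h u hu.2⟩
  · intro i _ _; exact hw i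

open scoped Classical in
lemma pr_compl {Ω : Type*} [Fintype Ω] (w : Ω → ℝ) (hwsum : ∑ u, w u = 1)
    (A : Ω → Prop) : pr w A = 1 - pr w (fun u => ¬ A u) := by
  have := Finset.sum_filter_add_sum_filter_not Finset.univ A w
  unfold pr
  rw [hwsum] at this
  convert_to (1 : ℝ) - (∑ u ∈ Finset.univ.filter (fun u => ¬ A u), w u) =
      1 - (∑ u ∈ Finset.univ.filter (fun u => ¬ A u), w u) using 2
  · linarith
  · congr
  · congr

open scoped Classical in
theorem fig1c_bounds {U : Type*} [Fintype U]
    (q : U → ℝ) (hq : ∀ u, 0 ≤ q u) (hqsum : ∑ u, q u = 1)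
    (fY : U → Fin 2 → Fin 2) (fO : U → Fin 2 → Fin 2)
    (θ : ℝ)
    (hθ : θ = pr q (fun u => fY u 1 = 1) - pr q (fun u => fY u 0 = 1))
    (p : Fin 2 → Fin 2 → ℝ)
    (hp : ∀ y x, p y x = pr q (fun u => fY u x = y ∧ fO u x = 1)) :
    p 0 0 + p 1 1 - 1 ≤ θ ∧ θ ≤ -(p 0 1) - p 1 0 + 1 := by
  have key : ∀ x : Fin 2, ∀ u : U, (fY u x = 0) ↔ ¬ (fY u x = 1) := by
    intro x u; omega
  have h11 : p 1 1 ≤ pr q (fun u => fY u 1 = 1) :=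
    (hp 1 1) ▸ pr_mono q hq _ _ (fun u h => h.1)
  have h10 : p 1 0 ≤ pr q (fun u => fY u 0 = 1) :=
    (hp 1 0) ▸ pr_mono q hq _ _ (fun u h => h.1)
  have h00 : p 0 0 ≤ pr q (fun u => fY u 0 = 0) :=
    (hp 0 0) ▸ pr_mono q hq _ _ (fun u h => h.1)
  have h01 : p 0 1 ≤ pr q (fun u => fY u 1 = 0) :=
    (hp 0 1) ▸ pr_mono q hq _ _ (fun u h => h.1)
  have c0 : pr q (fun u => fY u 0 = 1) = 1 - pr q (fun u => fY u 0 = 0) := by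
    rw [pr_compl q hqsum]
    congr 1
    apply congrArg
    funext u
    simp [key 0 u]
  have c1 : pr q (fun u => fY u 1 = 1) = 1 - pr q (fun u => fY u 1 = 0) := by
    rw [pr_compl q hqsum]
    congr 1
    apply congrArg
    funext u
    simp [key 1 u]
  constructor <;> [skip; skip] <;> rw [hθ] <;> linarith
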